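/- Let p, b, q ∈ ℂ. For j ≥ 1 set β_j = −j((j+1)/2 · b + (j−1)/2 · p + q) and γ_j = j! (q−p) ((−p−b)/2)^{j−1}, and for integers 0 ≤ j ≤ i set P_i^j = i!/(i−j)!. For n ≥ 1 let M_n be the (n+1)×(n+1) complex matrix defined as follows: for rows i ∈ {1, …, n}: the (i,1) entry is ∏_{s=n−i+1}^{n} β_s; for 1 ≤ j ≤ i the (i, j+1) entry is P_i^j · ∏_{s=n−i+1}^{n−j} β_s (an empty product being 1, so the (i, i+1) entry is P_i^i = i!); and the (i, j+1) entry is 0 for j > i; the last row (row n+1) is (γ_n, γ_{n−1}, …, γ_1, 1). Then det M_n = C(n+1, 2) · (p − b − 2q) · ∏_{j=1}^{n−1} j! β_j, where C(n+1,2) = n(n+1)/2 is the binomial coefficient. -/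

import Mathlib

open Finset

/-- `β_j = −j((j+1)/2 · b + (j−1)/2 · p + q)`. -/
noncomputable def β (p b q : ℂ) (j : ℕ) : ℂ :=
  -(j : ℂ) * (((j : ℂ) + 1) / 2 * b + ((j : ℂ) - 1) / 2 * p + q)

/-- `γ_j = j! (q−p) ((−p−b)/2)^{j−1}`. -/
noncomputable def γ (p b q : ℂ) (j : ℕ) : ℂ :=
  (Nat.factorial j : ℂ) * (q - p) * ((-p - b) / 2) ^ (j - 1)

/-- The `(n+1) × (n+1)` matrix `M_n` (rows and columns indexed by `Fin (n+1)`,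
corresponding to `1`-based indices `i+1` and `c+1`).  For `1`-based row `i ∈ {1,…,n}` and
column `j+1` with `0 ≤ j ≤ i` the entry is `P_i^j ∏_{s=n−i+1}^{n−j} β_s`
(where `P_i^j = i!/(i−j)!` is the descending factorial), and `0` for `j > i`;
the last row is `(γ_n, γ_{n−1}, …, γ_1, 1)`. -/
noncomputable def M (p b q : ℂ) (n : ℕ) : Matrix (Fin (n + 1)) (Fin (n + 1)) ℂ :=
  fun i c =>
    if (i : ℕ) < n then
      if (c : ℕ) ≤ (i : ℕ) + 1 then
        ((((i : ℕ) + 1).descFactorial (c : ℕ) : ℕ) : ℂ) *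
          ∏ s ∈ Finset.Icc (n - ((i : ℕ) + 1) + 1) (n - (c : ℕ)), β p b q s
      else 0
    else
      if (c : ℕ) < n then γ p b q (n - (c : ℕ)) else 1

/-!
Write `B_c = β_{n-c+1} ⋯ β_n` (`βTail`). In rows `i ≤ n`, the entry of `M_n` in column `c`
times `B_c` is `P_i^c B_i`, so the vector `u_c = (-1)^c B_c / c!` (`nullVec`) is annihilated by
these rows, because `∑_c (-1)^c C(i, c) = 0`. Since `u_0 = 1`, replacing the first column of `M_n`
by `M_n u` does not change the determinant, and the new first column vanishes except in the last
row. The cofactor of that entry is lower triangular with diagonal `1!, …, n!`. The entry itself,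
`∑_c γ_{n-c} u_c`, becomes a telescoping sum once we write `β_j = j (j x - y)` and
`q - p = x + y`, where `x = -(p+b)/2` and `y = (b-p)/2 + q`.
-/

open Matrix Nat

theorem Matrix.det_eq_mulVec_last_mul_det_submatrix {R : Type*} [CommRing R] {n : ℕ}
    (A : Matrix (Fin (n + 1)) (Fin (n + 1)) R) {v : Fin (n + 1) → R} (hv₀ : v 0 = 1)
    (hv : ∀ i : Fin n, (A *ᵥ v) i.castSucc = 0) :
    A.det = (-1) ^ n * (A *ᵥ v) (Fin.last n) * (A.submatrix Fin.castSucc Fin.succ).det := by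
  have hcol : (fun k ↦ ∑ i, v i • A k i) = A *ᵥ v := by
    ext k; simp [mulVec, dotProduct, mul_comm]
  have h := det_updateCol_sum A 0 v
  rw [hv₀, one_smul, hcol] at h
  rw [← h, det_succ_column_zero, Fin.sum_univ_castSucc]
  simp [hv, ← Fin.succAbove_zero]

theorem alternating_sum_range_choose_eq_zero {R : Type*} [CommRing R] {m N : ℕ} (hm : m ≠ 0)
    (hmN : m ≤ N) : ∑ c ∈ range (N + 1), (-1 : R) ^ c * m.choose c = 0 := by
  rw [← sum_range_add_sum_Ico _ (by omega : m + 1 ≤ N + 1)]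
  have h := congrArg (Int.cast : ℤ → R) (Int.alternating_sum_range_choose_of_ne hm)
  push_cast at h
  rw [h, zero_add]
  exact sum_eq_zero fun c hc ↦ by simp [choose_eq_zero_of_lt (mem_Ico.1 hc).1]

theorem cast_factorial_mul_prod_Icc {R : Type*} [CommSemiring R] {k n : ℕ} (h : k ≤ n) :
    (k ! : R) * ∏ s ∈ Icc (k + 1) n, (s : R) = n ! := by
  rw [← prod_Ico_id_eq_factorial, ← prod_Ico_id_eq_factorial,
    ← prod_Ico_consecutive _ (by omega : 1 ≤ k + 1) (by omega : k + 1 ≤ n + 1)]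
  push_cast
  rfl

theorem sum_neg_one_pow_mul_descFactorial_mul_prod_Icc {R : Type*} [CommRing R] (x y : R)
    (N : ℕ) :
    ∑ k ∈ range (N + 1), (-1) ^ (k + 1) * x ^ k * ((N + 1).descFactorial (k + 1) : R) *
        ∏ s ∈ Icc (k + 2) (N + 1), ((s : R) * x - y) =
      -(N + 1) * ∏ s ∈ Icc 1 N, ((s : R) * x - y) := by
  set T : ℕ → R := fun k ↦
    (-1) ^ k * x ^ k * ((N + 1).descFactorial (k + 1) : R) *
      ∏ s ∈ Icc (k + 1) N, ((s : R) * x - y)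
  have hstep : ∀ k ∈ range (N + 1), (-1) ^ (k + 1) * x ^ k *
      ((N + 1).descFactorial (k + 1) : R) * ∏ s ∈ Icc (k + 2) (N + 1), ((s : R) * x - y) =
      T (k + 1) - T k := by
    intro k hk
    obtain hkN | rfl := Nat.lt_or_eq_of_le (Nat.lt_succ_iff.1 (mem_range.1 hk))
    · have hD : (N + 1).descFactorial (k + 2) = (N - k) * (N + 1).descFactorial (k + 1) := by
        rw [Nat.descFactorial_succ]; congr 1; omega
      simp only [T, prod_Icc_succ_top (by omega : k + 2 ≤ N + 1),
        ← insert_Icc_add_one_left_eq_Icc (by omega : k + 1 ≤ N),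
        prod_insert (by simp : k + 1 ∉ Icc (k + 1 + 1) N), hD]
      push_cast [Nat.cast_sub hkN.le]
      ring
    · simp [T, pow_succ]
  rw [sum_congr rfl hstep, sum_range_sub]
  simp [T]
  ring

section

variable (p b q : ℂ)

theorem β_eq_mul (j : ℕ) : β p b q j = j * (j * ((-p - b) / 2) - ((b - p) / 2 + q)) := by
  unfold β; ring

theorem factorial_mul_prod_β {k n : ℕ} (h : k ≤ n) :
    (k ! : ℂ) * ∏ s ∈ Icc (k + 1) n, β p b q s =
      n ! * ∏ s ∈ Icc (k + 1) n, ((s : ℂ) * ((-p - b) / 2) - ((b - p) / 2 + q)) := by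
  simp only [β_eq_mul, prod_mul_distrib, ← mul_assoc, cast_factorial_mul_prod_Icc h]

noncomputable def βTail (n c : ℕ) : ℂ := ∏ s ∈ Icc (n - c + 1) n, β p b q s

noncomputable def nullVec (n : ℕ) (c : Fin (n + 1)) : ℂ :=
  (-1) ^ (c : ℕ) / (c : ℕ)! * βTail p b q n c

variable {p b q}

theorem M_mul_βTail {n : ℕ} {i : Fin (n + 1)} (hi : (i : ℕ) < n) (c : Fin (n + 1)) :
    M p b q n i c * βTail p b q n c =
      ((i + 1 : ℕ).descFactorial c : ℂ) * βTail p b q n (i + 1) := by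
  by_cases hc : (c : ℕ) ≤ i + 1
  · simp only [M, if_pos hi, if_pos hc, βTail, mul_assoc, Icc_add_one_left_eq_Ioc]
    rw [prod_Ioc_consecutive _ (by omega) (by omega)]
  · simp [M, hi, hc, Nat.descFactorial_eq_zero_iff_lt.2 (by omega : (i : ℕ) + 1 < c)]

theorem M_mulVec_nullVec_castSucc {n : ℕ} (i : Fin n) :
    (M p b q n *ᵥ nullVec p b q n) i.castSucc = 0 := by
  have hterm (c : Fin (n + 1)) : M p b q n i.castSucc c * nullVec p b q n c =
      βTail p b q n (i + 1) * ((-1) ^ (c : ℕ) * ((i + 1 : ℕ).choose c : ℂ)) := by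
    have hfac : ((c : ℕ)! : ℂ) ≠ 0 := by exact_mod_cast factorial_ne_zero _
    rw [nullVec, mul_left_comm, M_mul_βTail (by simp) c, descFactorial_eq_factorial_mul_choose]
    field_simp
    push_cast [Fin.val_castSucc]
    ring
  simp only [mulVec, dotProduct, hterm, ← mul_sum]
  rw [Fin.sum_univ_eq_sum_range (fun c ↦ (-1 : ℂ) ^ c * ((i + 1 : ℕ).choose c : ℂ)),
    alternating_sum_range_choose_eq_zero (by omega) (by omega), mul_zero]

theorem γ_mul_nullVec_eq {N c k : ℕ} (hck : c + k = N) :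
    γ p b q (N + 1 - c) * ((-1) ^ c / c ! * βTail p b q (N + 1) c) =
      (-1) ^ (N + 1) * (q - p) * ((-1) ^ (k + 1) * ((-p - b) / 2) ^ k *
        ((N + 1).descFactorial (k + 1) : ℂ) *
          ∏ s ∈ Icc (k + 2) (N + 1), ((s : ℂ) * ((-p - b) / 2) - ((b - p) / 2 + q))) := by
  have hβ := factorial_mul_prod_β p b q (by omega : k + 1 ≤ N + 1)
  have hD := factorial_mul_descFactorial (by omega : k + 1 ≤ N + 1)
  rw [show N + 1 - (k + 1) = c by omega] at hD
  have hfac : (c ! : ℂ) ≠ 0 := by exact_mod_cast factorial_ne_zero c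
  have hsign : (-1 : ℂ) ^ (N + 1) * (-1) ^ (k + 1) = (-1) ^ c := by
    rw [← pow_add, show N + 1 + (k + 1) = c + 2 * (k + 1) by omega, pow_add, pow_mul]
    simp
  rw [γ, βTail, show N + 1 - c + 1 = k + 2 by omega, show N + 1 - c = k + 1 by omega,
    Nat.add_sub_cancel]
  calc _ = (q - p) * ((-p - b) / 2) ^ k * (-1) ^ c / c ! *
        (((k + 1)! : ℂ) * ∏ s ∈ Icc (k + 2) (N + 1), β p b q s) := by ring
    _ = (q - p) * ((-p - b) / 2) ^ k * (-1) ^ c * ((N + 1).descFactorial (k + 1) : ℂ) *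
        ∏ s ∈ Icc (k + 2) (N + 1), ((s : ℂ) * ((-p - b) / 2) - ((b - p) / 2 + q)) := by
      rw [hβ, ← hD, div_mul_eq_mul_div, div_eq_iff hfac]; push_cast; ring
    _ = _ := by rw [← hsign]; ring

theorem M_mulVec_nullVec_last (N : ℕ) :
    (M p b q (N + 1) *ᵥ nullVec p b q (N + 1)) (Fin.last _) =
      (-1) ^ N * (N + 2) * ((b - p) / 2 + q) *
        ∏ s ∈ Icc 1 N, ((s : ℂ) * ((-p - b) / 2) - ((b - p) / 2 + q)) := by
  have hlast : M p b q (N + 1) (Fin.last _) (Fin.last _) * nullVec p b q (N + 1) (Fin.last _) =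
      (-1) ^ (N + 1) *
        ∏ s ∈ Icc 1 (N + 1), ((s : ℂ) * ((-p - b) / 2) - ((b - p) / 2 + q)) := by
    have hβ := factorial_mul_prod_β p b q (Nat.zero_le (N + 1))
    have hfac : ((N + 1)! : ℂ) ≠ 0 := by exact_mod_cast factorial_ne_zero _
    simp only [factorial_zero, cast_one, one_mul, zero_add] at hβ
    simp only [M, nullVec, βTail, Fin.val_last, lt_irrefl, if_false, one_mul, Nat.sub_self]
    rw [hβ, ← mul_assoc, div_mul_cancel₀ _ hfac]
  have hrow (c : Fin (N + 1)) :
      M p b q (N + 1) (Fin.last _) c.castSucc * nullVec p b q (N + 1) c.castSucc =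
        γ p b q (N + 1 - c) * ((-1) ^ (c : ℕ) / (c : ℕ)! * βTail p b q (N + 1) c) := by
    simp [M, nullVec, c.isLt]
  rw [mulVec, dotProduct, Fin.sum_univ_castSucc, hlast, sum_congr rfl fun c _ ↦ hrow c,
    Fin.sum_univ_eq_sum_range
      (fun c ↦ γ p b q (N + 1 - c) * ((-1) ^ c / c ! * βTail p b q (N + 1) c)),
    ← sum_range_reflect,
    sum_congr rfl fun k hk ↦ γ_mul_nullVec_eq (by simp at hk; omega : N + 1 - 1 - k + k = N),
    ← mul_sum, sum_neg_one_pow_mul_descFactorial_mul_prod_Icc, prod_Icc_succ_top (by omega)]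
  push_cast
  ring

theorem det_M_submatrix_castSucc_succ (n : ℕ) :
    ((M p b q n).submatrix Fin.castSucc Fin.succ).det = ∏ j ∈ Icc 1 n, (j ! : ℂ) := by
  have hlower : ((M p b q n).submatrix Fin.castSucc Fin.succ).IsLowerTriangular := by
    intro i j hij
    have : (i : ℕ) < j := hij
    simp only [submatrix_apply, M, Fin.val_castSucc, Fin.val_succ, if_pos i.isLt,
      if_neg (by omega : ¬ (j : ℕ) + 1 ≤ i + 1)]
  have hdiag (i : Fin n) : M p b q n i.castSucc i.succ = ((i + 1 : ℕ)! : ℂ) := by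
    simp only [M, Fin.val_castSucc, Fin.val_succ, if_pos i.isLt, if_pos le_rfl,
      descFactorial_self, Icc_eq_empty (by omega : ¬ n - (i + 1) + 1 ≤ n - (i + 1)),
      prod_empty, mul_one]
  rw [det_of_isLowerTriangular _ hlower]
  simp only [submatrix_apply, hdiag]
  rw [Fin.prod_univ_eq_prod_range (fun i ↦ ((i + 1)! : ℂ)), range_eq_Ico,
    prod_Ico_add' (fun j ↦ (j ! : ℂ)), zero_add, Ico_add_one_right_eq_Icc]

end

theorem det_M (p b q : ℂ) (n : ℕ) (hn : 1 ≤ n) :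
    (M p b q n).det = ((n + 1).choose 2 : ℂ) * (p - b - 2 * q) *
      ∏ j ∈ Finset.Icc 1 (n - 1), (Nat.factorial j : ℂ) * β p b q j := by
  obtain ⟨N, rfl⟩ : ∃ N, n = N + 1 := ⟨n - 1, by omega⟩
  have hv₀ : nullVec p b q (N + 1) 0 = 1 := by simp [nullVec, βTail]
  have hβ := factorial_mul_prod_β p b q (Nat.zero_le N)
  simp only [factorial_zero, cast_one, one_mul, zero_add] at hβ
  have hsign : (-1 : ℂ) ^ (N + 1) * (-1) ^ N = -1 := by
    rw [← pow_add]; exact Odd.neg_one_pow ⟨N, by ring⟩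
  rw [det_eq_mulVec_last_mul_det_submatrix _ hv₀ M_mulVec_nullVec_castSucc,
    M_mulVec_nullVec_last, det_M_submatrix_castSucc_succ, prod_Icc_succ_top (by omega),
    Nat.add_sub_cancel, prod_mul_distrib, hβ, Nat.cast_choose_two, factorial_succ]
  push_cast
  linear_combination ((N + 2) * ((b - p) / 2 + q) * (N + 1) * (N ! : ℂ) *
    (∏ s ∈ Icc 1 N, ((s : ℂ) * ((-p - b) / 2) - ((b - p) / 2 + q))) *
      ∏ j ∈ Icc 1 N, (j ! : ℂ)) * hsign
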